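/- Root transforms belong to S: For every integer m ≥ 1 and every θ ∈ ℝ, the root transform κ_{m,θ}(z) = z (1 − e^{iθ} z^m)^{−2/m} is holomorphic and injective on the open unit disk Δ, satisfies κ_{m,θ}(0) = 0 and κ_{m,θ}'(0) = 1 (hence belongs to the class S), its Taylor coefficient of z^{m+1} equals 2e^{iθ}/m, and all Taylor coefficients a_k(κ_{m,θ}) with k not congruent to 1 modulo m vanish. -/

import Mathlib

open Complex Metric

/-- The `n`-th Taylor coefficient of `f` at `0`. -/
noncomputable def taylorCoeff (f : ℂ → ℂ) (n : ℕ) : ℂ :=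
  iteratedDeriv n f 0 / (n.factorial : ℂ)

/-- The class `S` of normalized univalent functions on the unit disk. -/
def IsClassS (f : ℂ → ℂ) : Prop :=
  DifferentiableOn ℂ f (ball (0 : ℂ) 1) ∧ Set.InjOn f (ball (0 : ℂ) 1) ∧
    f 0 = 0 ∧ deriv f 0 = 1

/-- The root transform `κ_{m,θ}(z) = z (1 − e^{iθ} z^m)^{−2/m}` of the Koebe
function, using the principal branch of the complex power. -/
noncomputable def rootKoebe (m : ℕ) (θ : ℝ) (z : ℂ) : ℂ :=
  z * (1 - Complex.exp ((θ : ℂ) * I) * z ^ m) ^ (-(2 : ℂ) / (m : ℂ))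

/-!
Expanding `(1 - e^{iθ} w)^{-2/m}` by the binomial series and substituting `w = z^m` writes
`κ_{m,θ}(z)` as a power series on the unit disk that involves only the powers `z^{mn+1}`, with
`z^{m+1}` carrying the coefficient `-(-2/m) e^{iθ}`; uniqueness of power series expansions identifies
these coefficients with the Taylor coefficients, and also gives holomorphy and `κ'(0) = a₁ = 1`.
Injectivity reduces to that of the Koebe function `k(w) = w / (1 - w)^2` on the disk: since
`e^{iθ} κ_{m,θ}(z)^m = k(e^{iθ} z^m)`, equal values force equal `z^m`, and then the common nonzero
factor `(1 - e^{iθ} z^m)^{-2/m}` cancels.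
-/

open FormalMultilinearSeries

theorem hasFPowerSeriesOnBall_ofScalars_of_hasSum {𝕜 : Type*} [RCLike 𝕜] {f : 𝕜 → 𝕜}
    {a : ℕ → 𝕜} {r : ENNReal} (hr : 0 < r)
    (h : ∀ z ∈ Metric.eball (0 : 𝕜) r, HasSum (fun n => a n * z ^ n) (f z)) :
    HasFPowerSeriesOnBall f (ofScalars 𝕜 a) 0 r where
  r_le := by
    refine ENNReal.le_of_forall_nnreal_lt fun ρ hρ => ?_
    have hρ' : ((ρ : ℝ) : 𝕜) ∈ Metric.eball 0 r := by
      rwa [Metric.mem_eball, edist_zero_right, ← ofReal_norm, RCLike.norm_ofReal, NNReal.abs_eq,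
        ENNReal.ofReal_coe_nnreal]
    refine (ofScalars 𝕜 a).le_radius_of_tendsto (l := 0) ?_
    simpa [ofScalars_norm] using (h _ hρ').summable.tendsto_atTop_zero.norm
  r_pos := hr
  hasSum hy := by simpa [ofScalars_apply_eq, mul_comm] using h _ hy

theorem one_sub_ne_zero_of_norm_lt_one {R : Type*} [SeminormedRing R] [NormOneClass R] {x : R}
    (hx : ‖x‖ < 1) : 1 - x ≠ 0 :=
  sub_ne_zero.2 fun h => hx.ne (h ▸ norm_one)

theorem eball_zero_one_eq_ball : Metric.eball (0 : ℂ) 1 = ball 0 1 := by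
  simpa using Metric.eball_ofReal (x := (0 : ℂ)) (ε := 1)

theorem taylorCoeff_eq_of_hasFPowerSeriesAt {f : ℂ → ℂ} {a : ℕ → ℂ}
    (h : HasFPowerSeriesAt f (ofScalars ℂ a) 0) : taylorCoeff f = a :=
  ofScalars_series_injective ℂ ℂ (h.analyticAt.hasFPowerSeriesAt.eq_formalMultilinearSeries h)

theorem deriv_zero_eq_taylorCoeff_one (f : ℂ → ℂ) : deriv f 0 = taylorCoeff f 1 := by
  simp [taylorCoeff]

section RootKoebe

variable {m : ℕ} {θ : ℝ}

theorem norm_exp_mul_I_mul_pow_lt_one (hm : m ≠ 0) {z : ℂ} (hz : ‖z‖ < 1) :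
    ‖exp (θ * I) * z ^ m‖ < 1 := by
  rw [norm_mul, norm_exp_ofReal_mul_I, one_mul, norm_pow]
  exact pow_lt_one₀ (norm_nonneg z) hz hm

theorem injective_mul_add_one (hm : m ≠ 0) : Function.Injective (fun n : ℕ => m * n + 1) :=
  (add_left_injective 1).comp (mul_right_injective₀ hm)

noncomputable def rootKoebeCoeff (m : ℕ) (θ : ℝ) : ℕ → ℂ :=
  Function.extend (fun n => m * n + 1)
    (fun n => Ring.choose (-(2 : ℂ) / m) n * (-exp (θ * I)) ^ n) 0

theorem hasSum_rootKoebe (hm : m ≠ 0) {z : ℂ} (hz : ‖z‖ < 1) :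
    HasSum (fun k => rootKoebeCoeff m θ k * z ^ k) (rootKoebe m θ z) := by
  have hinj := injective_mul_add_one hm
  have hbinom : HasSum (fun n => (-(exp (θ * I) * z ^ m)) ^ n * Ring.choose (-(2 : ℂ) / m) n)
      ((1 - exp (θ * I) * z ^ m) ^ (-(2 : ℂ) / m)) := by
    have := (one_add_cpow_hasFPowerSeriesOnBall_zero (a := -(2 : ℂ) / m)).hasSum
      (y := -(exp (θ * I) * z ^ m)) (by
        rw [eball_zero_one_eq_ball, mem_ball_zero_iff, norm_neg]
        exact norm_exp_mul_I_mul_pow_lt_one hm hz)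
    simpa [binomialSeries, ofScalars_apply_eq, ← sub_eq_add_neg] using this
  rw [← hinj.hasSum_iff fun k hk => by simp [rootKoebeCoeff, Function.extend_apply' _ _ _ hk]]
  refine (hbinom.mul_left z).congr_fun fun n => ?_
  simp only [Function.comp_apply, rootKoebeCoeff, hinj.extend_apply]
  ring

theorem hasFPowerSeriesOnBall_rootKoebe (hm : m ≠ 0) :
    HasFPowerSeriesOnBall (rootKoebe m θ) (ofScalars ℂ (rootKoebeCoeff m θ)) 0 1 :=
  hasFPowerSeriesOnBall_ofScalars_of_hasSum one_pos fun z hz =>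
    hasSum_rootKoebe hm (by rwa [eball_zero_one_eq_ball, mem_ball_zero_iff] at hz)

theorem taylorCoeff_rootKoebe (hm : m ≠ 0) : taylorCoeff (rootKoebe m θ) = rootKoebeCoeff m θ :=
  taylorCoeff_eq_of_hasFPowerSeriesAt (hasFPowerSeriesOnBall_rootKoebe hm).hasFPowerSeriesAt

theorem differentiableOn_rootKoebe (hm : m ≠ 0) :
    DifferentiableOn ℂ (rootKoebe m θ) (ball 0 1) :=
  eball_zero_one_eq_ball ▸ (hasFPowerSeriesOnBall_rootKoebe hm).differentiableOn

theorem rootKoebe_zero : rootKoebe m θ 0 = 0 := zero_mul _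

theorem rootKoebeCoeff_mul_add_one (hm : m ≠ 0) (n : ℕ) :
    rootKoebeCoeff m θ (m * n + 1) = Ring.choose (-(2 : ℂ) / m) n * (-exp (θ * I)) ^ n :=
  (injective_mul_add_one hm).extend_apply _ _ _

theorem rootKoebeCoeff_eq_zero {k : ℕ} (hk : k % m ≠ 1 % m) : rootKoebeCoeff m θ k = 0 := by
  refine Function.extend_apply' _ _ _ ?_
  rintro ⟨n, rfl⟩
  exact hk (Nat.mul_add_mod _ _ _)

theorem rootKoebeCoeff_one (hm : m ≠ 0) : rootKoebeCoeff m θ 1 = 1 := by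
  simpa using rootKoebeCoeff_mul_add_one (θ := θ) hm 0

theorem rootKoebeCoeff_add_one (hm : m ≠ 0) :
    rootKoebeCoeff m θ (m + 1) = 2 * exp (θ * I) / m := by
  have h := rootKoebeCoeff_mul_add_one (θ := θ) hm 1
  rw [mul_one] at h
  rw [h, Ring.choose_one_right]
  ring

theorem rootKoebe_pow (hm : m ≠ 0) (z : ℂ) :
    rootKoebe m θ z ^ m = z ^ m / (1 - exp (θ * I) * z ^ m) ^ 2 := by
  have hexp : -(2 : ℂ) / m * m = -(2 : ℕ) := by field_simp; norm_num
  rw [rootKoebe, mul_pow, ← cpow_mul_nat, hexp, cpow_neg, cpow_natCast, div_eq_mul_inv]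

theorem injOn_koebe : Set.InjOn (fun w : ℂ => w / (1 - w) ^ 2) (ball 0 1) := by
  intro w₁ hw₁ w₂ hw₂ h
  rw [mem_ball_zero_iff] at hw₁ hw₂
  have h₁ := one_sub_ne_zero_of_norm_lt_one hw₁
  have h₂ := one_sub_ne_zero_of_norm_lt_one hw₂
  have h₁₂ : 1 - w₁ * w₂ ≠ 0 := one_sub_ne_zero_of_norm_lt_one <| by
    rw [norm_mul]
    nlinarith [norm_nonneg w₁, norm_nonneg w₂]
  have key : (w₁ - w₂) * (1 - w₁ * w₂) = 0 := by
    simp only at h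
    field_simp at h
    linear_combination h
  simpa [sub_eq_zero, h₁₂] using key

theorem injOn_rootKoebe (hm : m ≠ 0) : Set.InjOn (rootKoebe m θ) (ball 0 1) := by
  intro z₁ hz₁ z₂ hz₂ h
  rw [mem_ball_zero_iff] at hz₁ hz₂
  have hw : exp (θ * I) * z₁ ^ m = exp (θ * I) * z₂ ^ m := by
    refine injOn_koebe (mem_ball_zero_iff.2 (norm_exp_mul_I_mul_pow_lt_one hm hz₁))
      (mem_ball_zero_iff.2 (norm_exp_mul_I_mul_pow_lt_one hm hz₂)) ?_
    have := congrArg (fun w => exp (θ * I) * w ^ m) h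
    simpa only [rootKoebe_pow hm, mul_div_assoc] using this
  have hg : (1 - exp (θ * I) * z₂ ^ m) ^ (-(2 : ℂ) / m) ≠ 0 :=
    (cpow_ne_zero_iff_of_exponent_ne_zero (by simp [hm])).2
      (one_sub_ne_zero_of_norm_lt_one (norm_exp_mul_I_mul_pow_lt_one hm hz₂))
  rw [rootKoebe, rootKoebe, hw] at h
  exact mul_right_cancel₀ hg h

end RootKoebe

/-- **Root transforms belong to `S`**: for every integer `m ≥ 1` and `θ ∈ ℝ`,
`κ_{m,θ}` is holomorphic and injective on the unit disk, `κ_{m,θ}(0) = 0`,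
`κ_{m,θ}'(0) = 1` (so `κ_{m,θ} ∈ S`), its Taylor coefficient of `z^{m+1}` is
`2e^{iθ}/m`, and all Taylor coefficients `a_k` with `k ≢ 1 (mod m)` vanish. -/
theorem rootKoebe_properties (m : ℕ) (hm : 1 ≤ m) (θ : ℝ) :
    DifferentiableOn ℂ (rootKoebe m θ) (ball (0 : ℂ) 1) ∧
    Set.InjOn (rootKoebe m θ) (ball (0 : ℂ) 1) ∧
    rootKoebe m θ 0 = 0 ∧
    deriv (rootKoebe m θ) 0 = 1 ∧
    IsClassS (rootKoebe m θ) ∧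
    taylorCoeff (rootKoebe m θ) (m + 1) = 2 * Complex.exp ((θ : ℂ) * I) / (m : ℂ) ∧
    (∀ k : ℕ, k % m ≠ 1 % m → taylorCoeff (rootKoebe m θ) k = 0) := by
  have hm₀ : m ≠ 0 := Nat.one_le_iff_ne_zero.1 hm
  have hderiv : deriv (rootKoebe m θ) 0 = 1 := by
    rw [deriv_zero_eq_taylorCoeff_one, taylorCoeff_rootKoebe hm₀, rootKoebeCoeff_one hm₀]
  have hS : IsClassS (rootKoebe m θ) :=
    ⟨differentiableOn_rootKoebe hm₀, injOn_rootKoebe hm₀, rootKoebe_zero, hderiv⟩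
  refine ⟨hS.1, hS.2.1, rootKoebe_zero, hderiv, hS, ?_, fun k hk => ?_⟩
  · rw [taylorCoeff_rootKoebe hm₀, rootKoebeCoeff_add_one hm₀]
  · rw [taylorCoeff_rootKoebe hm₀, rootKoebeCoeff_eq_zero hk]
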